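/- arXiv:1102.4120 — 4 statements merged into one kernel-verified Lean document; each statement's English description precedes it below -/
import Mathlib

section
/- Let Γ = (G, φ) and Γ' = (G', φ') be infinite games such that Γ is simulated by Γ' (with memory set S), let A be the game automaton of Γ', and let ≈ be an equivalence relation on S × V that is compatible with A. Then Γ is simulated by the automaton game Γ'' obtained from the quotient automaton A/≈_S. -/
set_option linter.unusedVariables false

namespace Games

/-- A game arena: a directed graph whose vertices are partitioned between
Player 0 (`owner v = false`) and Player 1 (`owner v = true`). -/
structure GameGraph (V : Type*) where
  E : V → V → Prop
  owner : V → Bool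

/-- An infinite path through the game graph. -/
def IsPlay {V : Type*} (G : GameGraph V) (ρ : ℕ → V) : Prop :=
  ∀ i, G.E (ρ i) (ρ (i + 1))

/-- A property of positions holds infinitely often. -/
def InfOften (p : ℕ → Prop) : Prop := ∀ n, ∃ m, n ≤ m ∧ p m

/-- The set of elements occurring infinitely often in a sequence. -/
def InfSet {α : Type*} (ρ : ℕ → α) : Set α := {u | InfOften fun i => ρ i = u}

/-- Game simulation (Definition 1 of the paper): the game `(G, φ)` is simulated by the
game `(G', φ')` on the extended vertex set `S × V` with initial memory content `s0`. -/
structure IsSimulation {V S : Type*} (G : GameGraph V) (φ : (ℕ → V) → Prop)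
    (G' : GameGraph (S × V)) (φ' : (ℕ → S × V) → Prop) (s0 : S) : Prop where
  owner_eq : ∀ (s : S) (v : V), G'.owner (s, v) = G.owner v
  edge_lift : ∀ (s : S) (v v' : V), G.E v v' → ∃ s', G'.E (s, v) (s', v')
  mem_unique : ∀ (s : S) (v : V) (p₁ p₂ : S × V), G'.E (s, v) p₁ → G'.E (s, v) p₂ → p₁.1 = p₂.1
  edge_proj : ∀ (s s' : S) (v v' : V), G'.E (s, v) (s', v') → G.E v v'
  win_iff : ∀ ρ : ℕ → V, IsPlay G ρ → ∀ ρ' : ℕ → S × V,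
      ρ' 0 = (s0, ρ 0) → (∀ i, (ρ' i).2 = ρ i) → IsPlay G' ρ' → (φ ρ ↔ φ' ρ')

/-- A play is consistent with the (history-dependent) strategy `f` of Player 0. -/
def StratConsistent {V : Type*} (G : GameGraph V) (f : List V → V → V) (ρ : ℕ → V) : Prop :=
  ∀ i, G.owner (ρ i) = false → ρ (i + 1) = f (List.ofFn fun j : Fin i => ρ j) (ρ i)

/-- Player 0 has a strategy from `v` forcing every resulting play to satisfy `ψ`. -/
def ForcesFrom {V : Type*} (G : GameGraph V) (ψ : (ℕ → V) → Prop) (v : V) : Prop :=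
  ∃ f : List V → V → V, (∀ (h : List V) (u : V), G.owner u = false → G.E u (f h u)) ∧
    ∀ ρ : ℕ → V, ρ 0 = v → IsPlay G ρ → StratConsistent G f ρ → ψ ρ

end Games
namespace Games

/-- State space of a game automaton: the states `S × V` together with
`q₀ = Sum.inr false` and `q_sink = Sum.inr true`. -/
abbrev GA (S V : Type*) := (S × V) ⊕ Bool

/-- The initial state `q₀` of a game automaton. -/
def gaInit {S V : Type*} : GA S V := Sum.inr false

/-- The sink state `q_sink` of a game automaton. -/
def gaSink {S V : Type*} : GA S V := Sum.inr true

/-- `δ` is the transition function of the (deterministic) game automaton of the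
simulating game `Γ' = (G', φ')` (Definition 2 of the paper). -/
structure IsGameAutomaton {V S : Type*} (G : GameGraph V) (G' : GameGraph (S × V)) (s0 : S)
    (δ : GA S V → V → GA S V) : Prop where
  init_step : ∀ v' : V, δ (Sum.inr false) v' = Sum.inl (s0, v')
  sink_step : ∀ v' : V, δ (Sum.inr true) v' = Sum.inr true
  no_edge : ∀ (s : S) (v v' : V), ¬ G.E v v' → δ (Sum.inl (s, v)) v' = Sum.inr true
  edge : ∀ (s : S) (v v' : V), G.E v v' →
      ∃ s', δ (Sum.inl (s, v)) v' = Sum.inl (s', v') ∧ G'.E (s, v) (s', v')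

/-- The unique run of the deterministic automaton `δ` on the word `α`, from state `q`. -/
def gaRun {S V : Type*} (δ : GA S V → V → GA S V) (q : GA S V) (α : ℕ → V) : ℕ → GA S V
  | 0 => q
  | n + 1 => δ (gaRun δ q α n) (α n)

/-- `ρ` is a run of the automaton `δ` (starting at an arbitrary state). -/
def IsRun {S V : Type*} (δ : GA S V → V → GA S V) (ρ : ℕ → GA S V) : Prop :=
  ∀ i, ∃ a, ρ (i + 1) = δ (ρ i) a

/-- Extension of a relation on `S × V` to the full state set of a game automaton. -/
def ExtRel {S V : Type*} (R : S × V → S × V → Prop) : GA S V → GA S V → Prop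
  | Sum.inl p, Sum.inl q => R p q
  | Sum.inr b, Sum.inr b' => b = b'
  | Sum.inl _, Sum.inr _ => False
  | Sum.inr _, Sum.inl _ => False

/-- A run of the game automaton is accepting iff (once the initial state `q₀` is dropped,
if the run starts there) it is a winning play for Player 0 in `Γ' = (G', φ')`. -/
def RunAccepting {S V : Type*} (G' : GameGraph (S × V)) (φ' : (ℕ → S × V) → Prop)
    (ρ : ℕ → GA S V) : Prop :=
  (∃ σ : ℕ → S × V, (∀ i, ρ i = Sum.inl (σ i)) ∧ IsPlay G' σ ∧ φ' σ) ∨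
  (ρ 0 = Sum.inr false ∧
    ∃ σ : ℕ → S × V, (∀ i, ρ (i + 1) = Sum.inl (σ i)) ∧ IsPlay G' σ ∧ φ' σ)

/-- The ω-language of the game automaton `δ` (with acceptance induced by `φ'`). -/
def GALang {S V : Type*} (G' : GameGraph (S × V)) (φ' : (ℕ → S × V) → Prop)
    (δ : GA S V → V → GA S V) : Set (ℕ → V) :=
  {α | RunAccepting G' φ' (gaRun δ gaInit α)}

end Games
namespace Games

/-- `m` is the minimal (w.r.t. `le`) new memory content produced by `step` from some
`apx`-equivalent representative of the memory content `s` (the `s_min` of Definition 4). -/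
def MinRep {S V : Type*} (apx : S → S → Prop) (le : S → S → Prop)
    (step : S → V → V → S → Prop) (s : S) (v v' : V) (m : S) : Prop :=
  (∃ t, apx t s ∧ step t v v' m) ∧ ∀ m', (∃ t, apx t s ∧ step t v v' m') → le m m'

/-- The game graph of the automaton game `Γ''` obtained from the quotient automaton
`A/≈_S` (memory contents are `≈_S`-classes, transitions via minimal representatives). -/
def QuotGraph {S V : Type*} (G : GameGraph V) (apx : S → S → Prop) (le : S → S → Prop)
    (step : S → V → V → S → Prop) : GameGraph (Quot apx × V) where
  E := fun t t' => G.E t.2 t'.2 ∧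
    ∃ s m, Quot.mk apx s = t.1 ∧ MinRep apx le step s t.2 t'.2 m ∧ t'.1 = Quot.mk apx m
  owner := fun t => G.owner t.2

end Games
namespace Games

/-- Theorem 1 of the paper. If `Γ = (G, φ)` is simulated by
`Γ' = (G', φ')`, `A` (given by `δ`) is the game automaton of `Γ'`, and `≈` (given by `R`)
is a compatible equivalence relation on `S × V`, then `Γ` is simulated by the automaton
game `Γ''` of the quotient automaton `A/≈_S`. -/
theorem memory_reduction
    {V S : Type*} [Fintype V] [Fintype S] [LinearOrder S]
    (G : GameGraph V) (φ : (ℕ → V) → Prop)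
    (G' : GameGraph (S × V)) (φ' : (ℕ → S × V) → Prop) (s0 : S)
    (hsim : IsSimulation G φ G' φ' s0)
    (δ : GA S V → V → GA S V) (hA : IsGameAutomaton G G' s0 δ)
    (R : S × V → S × V → Prop) (hR : Equivalence R)
    (hcomp1 : ∀ (s₁ s₂ : S) (v v' : V), R (s₁, v) (s₂, v) →
        ExtRel R (δ (Sum.inl (s₁, v)) v') (δ (Sum.inl (s₂, v)) v'))
    (hcomp2 : ∀ ρ ρ' : ℕ → GA S V, IsRun δ ρ → IsRun δ ρ' →
        (∀ i, ExtRel R (ρ i) (ρ' i)) →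
        (RunAccepting G' φ' ρ ↔ RunAccepting G' φ' ρ')) :
    IsSimulation G φ
      (QuotGraph G (fun s₁ s₂ => ∀ v, R (s₁, v) (s₂, v)) (· ≤ ·)
        (fun t v v' m => δ (Sum.inl (t, v)) v' = Sum.inl (m, v')))
      (fun σ => (fun i => (σ i).2) ∈ GALang G' φ' δ)
      (Quot.mk _ s0) := by
  classical
  set apx : S → S → Prop := fun s₁ s₂ => ∀ v, R (s₁, v) (s₂, v) with hapx
  have apx_refl : ∀ s, apx s s := fun s v => hR.refl _
  have apx_symm : ∀ {a b}, apx a b → apx b a := fun h v => hR.symm (h v)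
  have apx_trans : ∀ {a b c}, apx a b → apx b c → apx a c :=
    fun h h' v => hR.trans (h v) (h' v)
  have apx_equiv : Equivalence apx := ⟨apx_refl, apx_symm, apx_trans⟩
  have quot_exact : ∀ {a b : S}, Quot.mk apx a = Quot.mk apx b → apx a b := by
    intro a b h
    exact apx_equiv.eqvGen_iff.mp (Quot.eq.mp h)
  -- the new memory content does not depend on the letter read
  have step_transfer : ∀ (t : S) (v v₁ v₂ : V) (m : S), G.E v v₁ → G.E v v₂ →
      δ (Sum.inl (t, v)) v₁ = Sum.inl (m, v₁) → δ (Sum.inl (t, v)) v₂ = Sum.inl (m, v₂) := by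
    intro t v v₁ v₂ m h1 h2 hd
    obtain ⟨m', hd', hE'⟩ := hA.edge t v v₂ h2
    obtain ⟨m'', hd'', hE''⟩ := hA.edge t v v₁ h1
    have hmm : m'' = m := by
      rw [hd] at hd''
      exact ((Prod.mk.injEq .. ▸ Sum.inl.inj hd'').1).symm
    rw [hmm] at hE''
    have : m = m' := hsim.mem_unique t v (m, v₁) (m', v₂) hE'' hE'
    rw [this]; exact hd'
  refine ⟨?_, ?_, ?_, ?_, ?_⟩
  · intro s v; rfl
  · -- edge_lift
    intro qs v v' h
    obtain ⟨s, hs⟩ := Quot.exists_rep qs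
    have hTne : {m : S | ∃ t, apx t s ∧ δ (Sum.inl (t, v)) v' = Sum.inl (m, v')}.Nonempty := by
      obtain ⟨s', hd, _⟩ := hA.edge s v v' h
      exact ⟨s', s, apx_refl s, hd⟩
    obtain ⟨m, hm, hmin⟩ := Set.exists_min_image _ id (Set.toFinite _) hTne
    exact ⟨Quot.mk apx m, h, s, m, hs, ⟨hm, fun m' hm' => hmin m' hm'⟩, rfl⟩
  · -- mem_unique
    rintro qs v p₁ p₂ ⟨hE₁, s₁, m₁, hq₁, hmin₁, hp₁⟩ ⟨hE₂, s₂, m₂, hq₂, hmin₂, hp₂⟩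
    have hs12 : apx s₁ s₂ := quot_exact (hq₁.trans hq₂.symm)
    have h12 : m₁ ≤ m₂ := by
      refine hmin₁.2 m₂ ?_
      obtain ⟨t, ht, hstep⟩ := hmin₂.1
      exact ⟨t, apx_trans ht (apx_symm hs12), step_transfer t v p₂.2 p₁.2 m₂ hE₂ hE₁ hstep⟩
    have h21 : m₂ ≤ m₁ := by
      refine hmin₂.2 m₁ ?_
      obtain ⟨t, ht, hstep⟩ := hmin₁.1
      exact ⟨t, apx_trans ht hs12, step_transfer t v p₁.2 p₂.2 m₁ hE₁ hE₂ hstep⟩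
    rw [hp₁, hp₂, le_antisymm h12 h21]
  · -- edge_proj
    rintro qs qs' v v' ⟨h, -⟩
    exact h
  · -- win_iff
    intro ρ hplay ρ'' h0 hproj hplay''
    have hρ : (fun i => (ρ'' i).2) = ρ := funext hproj
    show φ ρ ↔ (fun i => (ρ'' i).2) ∈ GALang G' φ' δ
    rw [hρ]
    -- the unique play of Γ' over ρ
    let σ : ℕ → S × V := fun n =>
      Nat.rec ((s0, ρ 0)) (fun n p => Sum.elim id (fun _ => p) (δ (Sum.inl p) (ρ (n + 1)))) n
    have hσstep : ∀ n, σ (n + 1) = Sum.elim id (fun _ => σ n) (δ (Sum.inl (σ n)) (ρ (n + 1))) :=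
      fun n => rfl
    have key : ∀ n, (σ n).2 = ρ n ∧ δ (Sum.inl (σ n)) (ρ (n + 1)) = Sum.inl (σ (n + 1)) ∧
        G'.E (σ n) (σ (n + 1)) := by
      have main : ∀ n, (σ n).2 = ρ n →
          δ (Sum.inl (σ n)) (ρ (n + 1)) = Sum.inl (σ (n + 1)) ∧ G'.E (σ n) (σ (n + 1)) ∧
          (σ (n + 1)).2 = ρ (n + 1) := by
        intro n hv
        obtain ⟨s', hd, hE⟩ := hA.edge (σ n).1 (ρ n) (ρ (n + 1)) (hplay n)
        have hσn : (((σ n).1, ρ n) : S × V) = σ n := by rw [← hv]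
        rw [hσn] at hd hE
        have h1 : σ (n + 1) = (s', ρ (n + 1)) := by rw [hσstep n, hd]; rfl
        refine ⟨by rw [h1]; exact hd, by rw [h1]; exact hE, by rw [h1]⟩
      intro n
      induction n with
      | zero =>
        obtain ⟨h1, h2, _⟩ := main 0 rfl
        exact ⟨rfl, h1, h2⟩
      | succ n ih =>
        have hv : (σ (n + 1)).2 = ρ (n + 1) := (main n ih.1).2.2
        obtain ⟨h1, h2, _⟩ := main (n + 1) hv
        exact ⟨hv, h1, h2⟩
    have hrun : ∀ n, gaRun δ gaInit ρ (n + 1) = Sum.inl (σ n) := by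
      intro n
      induction n with
      | zero => exact hA.init_step (ρ 0)
      | succ n ih =>
        show δ (gaRun δ gaInit ρ (n + 1)) (ρ (n + 1)) = _
        rw [ih]; exact (key n).2.1
    have hplayσ : IsPlay G' σ := fun n => (key n).2.2
    have hprojσ : ∀ i, (σ i).2 = ρ i := fun i => (key i).1
    have hiff : RunAccepting G' φ' (gaRun δ gaInit ρ) ↔ φ' σ := by
      constructor
      · rintro (⟨σ', h', -, -⟩ | ⟨-, σ', h', -, hφ⟩)
        · exact absurd (h' 0) (by simp [gaRun, gaInit])
        · have hss : σ' = σ := funext fun i => Sum.inl.inj ((h' i).symm.trans (hrun i))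
          exact hss ▸ hφ
      · intro hφ
        exact Or.inr ⟨rfl, σ, hrun, hplayσ, hφ⟩
    exact (hsim.win_iff ρ hplay σ rfl hprojσ hplayσ).trans hiff.symm

end Games
end

section
/- Let A be a Büchi automaton and cl(A) its closure. Then A and cl(A) recognize the same ω-language: L(A) = L(cl(A)). -/
set_option linter.unusedVariables false

namespace Games

/-- A (nondeterministic) Büchi automaton. -/
structure BA (Q A : Type*) where
  init : Q
  Tr : Q → A → Q → Prop
  final : Q → Prop

/-- Büchi acceptance: some run on `α` visits final states infinitely often. -/
def BAAccept {Q A : Type*} (M : BA Q A) (α : ℕ → A) : Prop :=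
  ∃ ρ : ℕ → Q, ρ 0 = M.init ∧ (∀ i, M.Tr (ρ i) (α i) (ρ (i + 1))) ∧
    InfOften fun i => M.final (ρ i)

/-- The ω-language recognized by a Büchi automaton. -/
def BALang {Q A : Type*} (M : BA Q A) : Set (ℕ → A) := {α | BAAccept M α}

/-- Duplicator's run in the delayed simulation game, determined by a strategy `τ`
(a function of the history of letters and Spoiler states), Duplicator's start state `q'`,
Spoiler's letters `α` and Spoiler's run `ρ`. -/
def dupRun {Q A : Type*} (τ : List (A × Q) → Q) (q' : Q) (α : ℕ → A) (ρ : ℕ → Q) : ℕ → Q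
  | 0 => q'
  | i + 1 => τ ((List.range (i + 1)).map fun j => (α j, ρ (j + 1)))

/-- `q'` delayed simulates `q` (written `q ⪯_de q'`): Duplicator has a winning strategy
in the delayed simulation game `G_de(q, q')`: against every legal behaviour of Spoiler,
Duplicator's answers are legal and every final state visited by Spoiler at position `i`
is answered by a final state of Duplicator at some position `j ≥ i`. -/
def DelSim {Q A : Type*} (M : BA Q A) (q q' : Q) : Prop :=
  ∃ τ : List (A × Q) → Q, ∀ (α : ℕ → A) (ρ : ℕ → Q), ρ 0 = q →
    (∀ i, M.Tr (ρ i) (α i) (ρ (i + 1))) →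
    (∀ i, M.Tr (dupRun τ q' α ρ i) (α i) (dupRun τ q' α ρ (i + 1))) ∧
    (∀ i, M.final (ρ i) → ∃ j, i ≤ j ∧ M.final (dupRun τ q' α ρ j))

/-- Delayed simulation equivalence `q ≃_de q'`. -/
def DelSimEq {Q A : Type*} (M : BA Q A) (q q' : Q) : Prop :=
  DelSim M q q' ∧ DelSim M q' q

end Games
namespace Games

/-- The history visible to Duplicator in a bisimulation game: for each round the side
chosen by Spoiler, the letter, and the state chosen by Spoiler. -/
def bisHist {Q A : Type*} (b : ℕ → Bool) (α : ℕ → A) (s : ℕ → Q) (i : ℕ) :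
    List (Bool × A × Q) :=
  (List.range (i + 1)).map fun j => (b j, α j, s j)

/-- The run built on side `side` in a bisimulation game: in round `i` Spoiler extends
the run of side `b i` by the state `s i`, and Duplicator extends the other run
according to the strategy `τ`. -/
def bisRun {Q A : Type*} (τ : List (Bool × A × Q) → Q) (side : Bool) (q : Q)
    (b : ℕ → Bool) (α : ℕ → A) (s : ℕ → Q) : ℕ → Q
  | 0 => q
  | i + 1 => if b i = side then s i else τ (bisHist b α s i)

/-- Delayed bisimulation `q ≈_de q'`: Duplicator has a winning strategy in the game where
in each round Spoiler chooses which of the two runs to extend (by a legal transition) and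
Duplicator extends the other run with the same letter; every final state at position `i`
of either run must be answered by a final state at some position `j ≥ i` of the other run. -/
def DelBisim {Q A : Type*} (M : BA Q A) (q q' : Q) : Prop :=
  ∃ τ : List (Bool × A × Q) → Q, ∀ (b : ℕ → Bool) (α : ℕ → A) (s : ℕ → Q),
    (∀ i, (b i = false → M.Tr (bisRun τ false q b α s i) (α i) (s i)) ∧
          (b i = true → M.Tr (bisRun τ true q' b α s i) (α i) (s i))) →
    (∀ i, M.Tr (bisRun τ false q b α s i) (α i) (bisRun τ false q b α s (i + 1)) ∧
          M.Tr (bisRun τ true q' b α s i) (α i) (bisRun τ true q' b α s (i + 1))) ∧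
    (∀ i, (M.final (bisRun τ false q b α s i) →
              ∃ j, i ≤ j ∧ M.final (bisRun τ true q' b α s j)) ∧
          (M.final (bisRun τ true q' b α s i) →
              ∃ j, i ≤ j ∧ M.final (bisRun τ false q b α s j)))

/-- Direct bisimulation `q ≈_di q'`: as delayed bisimulation, but the two runs must agree
on finality at every position. -/
def DirBisim {Q A : Type*} (M : BA Q A) (q q' : Q) : Prop :=
  ∃ τ : List (Bool × A × Q) → Q, ∀ (b : ℕ → Bool) (α : ℕ → A) (s : ℕ → Q),
    (∀ i, (b i = false → M.Tr (bisRun τ false q b α s i) (α i) (s i)) ∧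
          (b i = true → M.Tr (bisRun τ true q' b α s i) (α i) (s i))) →
    (∀ i, M.Tr (bisRun τ false q b α s i) (α i) (bisRun τ false q b α s (i + 1)) ∧
          M.Tr (bisRun τ true q' b α s i) (α i) (bisRun τ true q' b α s (i + 1))) ∧
    (∀ i, M.final (bisRun τ false q b α s i) ↔ M.final (bisRun τ true q' b α s i))

/-- The final states of the closure `cl(A)`: the least set containing the final states
and every state all of whose successors are already in the set. -/
inductive ClFin {Q A : Type*} (M : BA Q A) : Q → Prop
  | base (q : Q) : M.final q → ClFin M q
  | step (q : Q) : (∀ a q', M.Tr q a q' → ClFin M q') → ClFin M q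

/-- The closure `cl(A)` of a Büchi automaton. -/
def clBA {Q A : Type*} (M : BA Q A) : BA Q A where
  init := M.init
  Tr := M.Tr
  final := ClFin M

end Games
namespace Games

theorem InfOften.mono {p q : ℕ → Prop} (hpq : ∀ i, p i → q i) (h : InfOften p) :
    InfOften q :=
  fun n => (h n).imp fun _ ⟨hnm, hp⟩ => ⟨hnm, hpq _ hp⟩

theorem ClFin.exists_final_of_run {Q A : Type*} {M : BA Q A} {α : ℕ → A} {ρ : ℕ → Q}
    (hρ : ∀ i, M.Tr (ρ i) (α i) (ρ (i + 1))) {m : ℕ} (h : ClFin M (ρ m)) :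
    ∃ j, m ≤ j ∧ M.final (ρ j) := by
  generalize hq : ρ m = q at h
  induction h generalizing m with
  | base q hq' => exact ⟨m, le_rfl, hq ▸ hq'⟩
  | step q _ ih =>
    obtain ⟨j, hj, hfin⟩ := ih (α m) (ρ (m + 1)) (hq ▸ hρ m) rfl
    exact ⟨j, by omega, hfin⟩

/-- A Büchi automaton and its closure recognize the same ω-language. -/
theorem closure_language {Q A : Type*} (M : BA Q A) :
    BALang M = BALang (clBA M) := by
  ext α
  constructor
  · rintro ⟨ρ, h0, hρ, hinf⟩
    exact ⟨ρ, h0, hρ, hinf.mono fun i => ClFin.base (ρ i)⟩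
  · rintro ⟨ρ, h0, hρ, hinf⟩
    refine ⟨ρ, h0, hρ, fun n => ?_⟩
    obtain ⟨m, hnm, hcl⟩ := hinf n
    obtain ⟨j, hmj, hfin⟩ := ClFin.exists_final_of_run (M := M) hρ hcl
    exact ⟨j, hnm.trans hmj, hfin⟩

end Games
end

section
/- Let A be a Büchi game automaton and ≃_de the delayed simulation equivalence relation on its states. Then ≃_de is compatible with A, i.e., (1) (s₁,v) ≃_de (s₂,v) implies δ((s₁,v),v') ≃_de δ((s₂,v),v') for all v', and (2) whenever two runs ρ, ρ' of A (from arbitrary states) satisfy ρ(i) ≃_de ρ'(i) for all i, ρ is accepting iff ρ' is accepting. -/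
set_option linter.unusedVariables false

namespace Games

/-- A Büchi game automaton, viewed as a Büchi automaton over the alphabet `V`:
transitions are the graph of `δ`, final states are those corresponding to the final
vertices `F'` of the simulating Büchi game. -/
def gaBA {S V : Type*} (δ : GA S V → V → GA S V) (F' : Set (S × V)) : BA (GA S V) V where
  init := gaInit
  Tr := fun q a q' => δ q a = q'
  final := fun q => ∃ p, q = Sum.inl p ∧ p ∈ F'

section Helpers

variable {V S : Type*} (δ : GA S V → V → GA S V) (F' : Set (S × V))

/-- Any run of the deterministic automaton is the canonical run. -/
lemma gaRun_eq_of_run (α : ℕ → V) (ρ : ℕ → GA S V) (q : GA S V) (h0 : ρ 0 = q)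
    (h : ∀ i, (gaBA δ F').Tr (ρ i) (α i) (ρ (i + 1))) : ∀ i, ρ i = gaRun δ q α i := by
  intro i
  induction i with
  | zero => simpa [gaRun] using h0
  | succ n ih =>
    have hn : δ (ρ n) (α n) = ρ (n + 1) := h n
    simp only [gaRun, ← ih, ← hn]

/-- Forward extraction from delayed simulation in a deterministic automaton. -/
lemma delSim_run {q q' : GA S V} (h : DelSim (gaBA δ F') q q') :
    ∀ (α : ℕ → V) (i : ℕ), (gaBA δ F').final (gaRun δ q α i) →
      ∃ j, i ≤ j ∧ (gaBA δ F').final (gaRun δ q' α j) := by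
  obtain ⟨τ, hτ⟩ := h
  intro α i hf
  have hρ : ∀ i, (gaBA δ F').Tr (gaRun δ q α i) (α i) (gaRun δ q α (i + 1)) := fun _ => rfl
  obtain ⟨hleg, hdel⟩ := hτ α (gaRun δ q α) rfl hρ
  have hdup : ∀ j, dupRun τ q' α (gaRun δ q α) j = gaRun δ q' α j := by
    intro j
    induction j with
    | zero => rfl
    | succ n ih =>
      have hn : δ (dupRun τ q' α (gaRun δ q α) n) (α n)
          = dupRun τ q' α (gaRun δ q α) (n + 1) := hleg n
      rw [← hn, ih]
      rfl
  obtain ⟨j, hj, hfj⟩ := hdel i hf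
  exact ⟨j, hj, by rwa [hdup] at hfj⟩

/-- Converse: the run condition yields a (positional) delayed-simulation strategy. -/
lemma run_delSim {q q' : GA S V}
    (h : ∀ (α : ℕ → V) (i : ℕ), (gaBA δ F').final (gaRun δ q α i) →
      ∃ j, i ≤ j ∧ (gaBA δ F').final (gaRun δ q' α j)) :
    DelSim (gaBA δ F') q q' := by
  refine ⟨fun l => l.foldl (fun r p => δ r p.1) q', ?_⟩
  intro α ρ h0 htr
  have hρ : ∀ i, ρ i = gaRun δ q α i := gaRun_eq_of_run δ F' α ρ q h0 htr
  have hdup : ∀ i, dupRun (fun l => l.foldl (fun r p => δ r p.1) q') q' α ρ i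
      = gaRun δ q' α i := by
    intro i
    induction i with
    | zero => rfl
    | succ n ih =>
      show ((List.range (n + 1)).map fun j => (α j, ρ (j + 1))).foldl
          (fun r p => δ r p.1) q' = gaRun δ q' α (n + 1)
      clear ih
      induction n with
      | zero => rw [List.range_succ, List.range_zero]; rfl
      | succ m ihm =>
        rw [List.range_succ, List.map_append, List.foldl_append, ihm]
        rfl
  constructor
  · intro i
    show δ _ (α i) = _
    rw [hdup, hdup]
    rfl
  · intro i hf
    rw [hρ] at hf
    obtain ⟨j, hj, hfj⟩ := h α i hf
    exact ⟨j, hj, by rw [hdup]; exact hfj⟩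

/-- Delayed simulation is preserved by a deterministic transition step. -/
lemma delSim_step {q q' : GA S V} (h : DelSim (gaBA δ F') q q') (v' : V) :
    DelSim (gaBA δ F') (δ q v') (δ q' v') := by
  apply run_delSim
  intro α i hf
  set β : ℕ → V := fun n => Nat.rec v' (fun m _ => α m) n with hβ
  have hrun : ∀ (r : GA S V) (k : ℕ), gaRun δ (δ r v') α k = gaRun δ r β (k + 1) := by
    intro r k
    induction k with
    | zero => rfl
    | succ n ih =>
      show δ (gaRun δ (δ r v') α n) (α n) = δ (gaRun δ r β (n + 1)) (β (n + 1))
      rw [ih]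
  rw [hrun] at hf
  obtain ⟨j, hj, hfj⟩ := delSim_run δ F' h β (i + 1) hf
  obtain ⟨k, rfl⟩ := Nat.exists_eq_add_of_le hj
  refine ⟨i + k, Nat.le_add_right _ _, ?_⟩
  rw [hrun]
  have : i + k + 1 = i + 1 + k := by omega
  rw [this]
  exact hfj

end Helpers

/-- Remark 5 of the paper. For a Büchi game automaton `A`, delayed
simulation equivalence `≃_de` is compatible with `A`:
(1) it is preserved by the transition function, and
(2) two runs that are pointwise `≃_de`-equivalent are equi-accepting. -/
theorem delayed_sim_compatible_with_buchi_game_automaton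
    {V S : Type*} [Fintype V] [Fintype S]
    (G : GameGraph V) (φ : (ℕ → V) → Prop)
    (G' : GameGraph (S × V)) (F' : Set (S × V)) (s0 : S)
    (hsim : IsSimulation G φ G' (fun ρ' => InfOften fun i => ρ' i ∈ F') s0)
    (δ : GA S V → V → GA S V) (hA : IsGameAutomaton G G' s0 δ) :
    (∀ (s₁ s₂ : S) (v : V), DelSimEq (gaBA δ F') (Sum.inl (s₁, v)) (Sum.inl (s₂, v)) →
        ∀ v' : V, DelSimEq (gaBA δ F') (δ (Sum.inl (s₁, v)) v') (δ (Sum.inl (s₂, v)) v')) ∧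
    (∀ ρ ρ' : ℕ → GA S V, IsRun δ ρ → IsRun δ ρ' →
        (∀ i, DelSimEq (gaBA δ F') (ρ i) (ρ' i)) →
        ((InfOften fun i => (gaBA δ F').final (ρ i)) ↔
          InfOften fun i => (gaBA δ F').final (ρ' i))) := by
  constructor
  · rintro s₁ s₂ v ⟨h1, h2⟩ v'
    exact ⟨delSim_step δ F' h1 v', delSim_step δ F' h2 v'⟩
  · intro ρ ρ' hρ hρ' heq
    have key : ∀ σ σ' : ℕ → GA S V, IsRun δ σ' →
        (∀ i, DelSim (gaBA δ F') (σ i) (σ' i)) →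
        (InfOften fun i => (gaBA δ F').final (σ i)) →
        InfOften fun i => (gaBA δ F').final (σ' i) := by
      intro σ σ' hr' hsim' hinf n
      obtain ⟨m, hm, hfm⟩ := hinf n
      choose a ha using hr'
      have hshift : ∀ j, gaRun δ (σ' m) (fun k => a (m + k)) j = σ' (m + j) := by
        intro j
        induction j with
        | zero => rfl
        | succ k ih =>
          simp only [gaRun]
          rw [ih]
          exact (ha (m + k)).symm
      obtain ⟨j, _, hfj⟩ := delSim_run δ F' (hsim' m) (fun k => a (m + k)) 0 hfm
      refine ⟨m + j, by omega, ?_⟩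
      rw [hshift] at hfj
      exact hfj
    exact ⟨fun h => key ρ ρ' hρ' (fun i => (heq i).1) h,
           fun h => key ρ' ρ hρ (fun i => (heq i).2) h⟩

end Games
end

section
/- In a Büchi game (G, F) on a finite game graph G = (V, E) with final vertex set F ⊆ V, the winning region W₀ of Player 0 equals the 0-attractor of Recur₀(F): W₀ = Attr₀(Recur₀(F)), where Recur₀(F) ⊆ F is the set of final vertices from which Player 0 can force infinitely many visits to F, and Attr₀(X) is the set of vertices from which Player 0 can force a visit to X. -/
set_option linter.unusedVariables false

namespace Games

/-- The winning region of Player 0 in the Büchi game `(G, F)`. -/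
def BuchiW0 {V : Type*} (G : GameGraph V) (F : Set V) : Set V :=
  {v | ForcesFrom G (fun ρ => InfOften fun i => ρ i ∈ F) v}

/-- The `0`-attractor of `X`: the vertices from which Player 0 can force a visit to `X`. -/
def Attr0 {V : Type*} (G : GameGraph V) (X : Set V) : Set V :=
  {v | ForcesFrom G (fun ρ => ∃ i, ρ i ∈ X) v}

/-- `Recur₀(F)`: the final vertices from which Player 0 can force infinitely many
visits to `F`. -/
def Recur0 {V : Type*} (G : GameGraph V) (F : Set V) : Set V :=
  {v | v ∈ F ∧ ForcesFrom G (fun ρ => InfOften fun i => ρ i ∈ F) v}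

/-! Auxiliary material -/

def Hist {V : Type*} (ρ : ℕ → V) (k : ℕ) : List V := List.ofFn fun j : Fin k => ρ j

@[simp] lemma Hist_length {V : Type*} (ρ : ℕ → V) (k : ℕ) : (Hist ρ k).length = k := by
  simp [Hist]

lemma Hist_getElem {V : Type*} (ρ : ℕ → V) (k j : ℕ) (h : j < (Hist ρ k).length) :
    (Hist ρ k)[j] = ρ j := by
  simp [Hist]

lemma Hist_succ {V : Type*} (ρ : ℕ → V) (k : ℕ) :
    Hist ρ (k + 1) = Hist ρ k ++ [ρ k] := by
  unfold Hist
  rw [List.ofFn_succ']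
  simp [List.concat_eq_append]

lemma Hist_drop {V : Type*} (ρ : ℕ → V) (i k : ℕ) (h : i ≤ k) :
    (Hist ρ k).drop i = Hist (fun m => ρ (i + m)) (k - i) := by
  apply List.ext_getElem (by simp)
  intro j h1 h2
  rw [List.getElem_drop, Hist_getElem, Hist_getElem]

lemma mem_Hist {V : Type*} {ρ : ℕ → V} {k : ℕ} {x : V} (hx : x ∈ Hist ρ k) :
    ∃ j, j < k ∧ ρ j = x := by
  simp only [Hist, List.mem_ofFn] at hx
  obtain ⟨j, hj⟩ := hx
  exact ⟨j, j.isLt, hj⟩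

/-- Every vertex on a play consistent with a Büchi-winning strategy is itself winning. -/
lemma mem_BuchiW0_of_consistent {V : Type*} (G : GameGraph V) (F : Set V)
    (f : List V → V → V)
    (hf : ∀ (h : List V) (u : V), G.owner u = false → G.E u (f h u))
    (v : V)
    (hwin : ∀ ρ : ℕ → V, ρ 0 = v → IsPlay G ρ → StratConsistent G f ρ →
      InfOften fun i => ρ i ∈ F)
    (ρ : ℕ → V) (hρ0 : ρ 0 = v) (hplay : IsPlay G ρ) (hcons : StratConsistent G f ρ)
    (i : ℕ) : ρ i ∈ BuchiW0 G F := by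
  refine ⟨fun h u => f (Hist ρ i ++ h) u, fun h u hu => hf _ u hu, ?_⟩
  intro τ hτ0 hτplay hτcons
  set σ : ℕ → V := fun j => if j < i then ρ j else τ (j - i) with hσ
  have hσρ : ∀ j, j ≤ i → σ j = ρ j := by
    intro j hj
    rcases Nat.lt_or_ge j i with h' | h'
    · simp [hσ, h']
    · have : j = i := le_antisymm hj h'
      subst this
      simp [hσ, hτ0]
  have hστ : ∀ j, σ (i + j) = τ j := by
    intro j
    simp [hσ, Nat.not_lt.mpr (Nat.le_add_right i j)]
  have hσplay : IsPlay G σ := by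
    intro j
    rcases Nat.lt_or_ge j i with h' | h'
    · rw [hσρ j (le_of_lt h'), hσρ (j+1) h']
      exact hplay j
    · obtain ⟨m, rfl⟩ := Nat.exists_eq_add_of_le h'
      have e1 := hστ m
      have e2 := hστ (m + 1)
      rw [show i + m + 1 = i + (m + 1) by omega] at *
      rw [e1]
      rw [e2]
      exact hτplay m
  have hσ0 : σ 0 = v := by rw [hσρ 0 (Nat.zero_le i)]; exact hρ0
  have hhist : ∀ j, j ≤ i → (List.ofFn fun m : Fin j => σ m) = Hist ρ j := by
    intro j hj
    unfold Hist
    congr 1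
    funext m
    exact hσρ m (le_trans (le_of_lt m.isLt) hj)
  have hσcons : StratConsistent G f σ := by
    intro j hown
    rcases Nat.lt_or_ge j i with h' | h'
    · rw [hσρ j (le_of_lt h')] at hown
      rw [hσρ (j+1) h', hσρ j (le_of_lt h'), hhist j (le_of_lt h')]
      exact hcons j hown
    · obtain ⟨m, rfl⟩ := Nat.exists_eq_add_of_le h'
      rw [hστ m] at hown
      have := hτcons m hown
      have hsplit : (List.ofFn fun l : Fin (i + m) => σ l) =
          Hist ρ i ++ List.ofFn fun l : Fin m => τ l := by
        rw [List.ofFn_add]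
        congr 1
        · unfold Hist
          congr 1
          funext l
          exact hσρ l (le_of_lt l.isLt)
        · congr 1
          funext l
          simp only [Fin.coe_natAdd]
          exact hστ l
      rw [show i + m + 1 = i + (m + 1) by omega, hστ (m+1), hστ m, hsplit]
      exact this
  have hinf := hwin σ hσ0 hσplay hσcons
  intro n
  obtain ⟨m, hm, hmF⟩ := hinf (i + n)
  refine ⟨m - i, by omega, ?_⟩
  have : σ m ∈ F := hmF
  rwa [show m = i + (m - i) by omega, hστ (m - i)] at this

theorem buchi_winning_region_eq_attractor_recur'
    {V : Type*} (G : GameGraph V) (F : Set V) :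
    BuchiW0 G F = Attr0 G (Recur0 G F) := by
  classical
  apply Set.Subset.antisymm
  · -- W₀ ⊆ Attr₀(Recur₀ F)
    rintro v ⟨f, hf, hwin⟩
    refine ⟨f, hf, ?_⟩
    intro ρ h0 hp hc
    obtain ⟨i, _, hiF⟩ := hwin ρ h0 hp hc 0
    exact ⟨i, hiF, mem_BuchiW0_of_consistent G F f hf v hwin ρ h0 hp hc i⟩
  · -- Attr₀(Recur₀ F) ⊆ W₀
    rintro v ⟨g, hg, hreach⟩
    set W := BuchiW0 G F with hW
    -- chosen winning strategies
    set fw : V → List V → V → V := fun u =>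
      if h : u ∈ W then h.choose else g with hfwdef
    have hfw_edge : ∀ u (h : List V) (x : V), G.owner x = false → G.E x (fw u h x) := by
      intro u h x hx
      by_cases hu : u ∈ W
      · simp only [hfwdef, dif_pos hu]
        exact hu.choose_spec.1 h x hx
      · simp only [hfwdef, dif_neg hu]
        exact hg h x hx
    have hfw_win : ∀ u, u ∈ W → ∀ τ : ℕ → V, τ 0 = u → IsPlay G τ →
        StratConsistent G (fw u) τ → InfOften fun i => τ i ∈ F := by
      intro u hu τ h0 hp hc
      have := hu.choose_spec.2 τ h0 hp
      simp only [hfwdef, dif_pos hu] at hc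
      exact this hc
    set p : V → Bool := fun x => decide (x ∈ W) with hp
    set comb : List V → V → V := fun h u =>
      if hi : (h ++ [u]).findIdx p < (h ++ [u]).length then
        fw ((h ++ [u])[(h ++ [u]).findIdx p]) (h.drop ((h ++ [u]).findIdx p)) u
      else g h u with hcombdef
    have hcomb_edge : ∀ (h : List V) (u : V), G.owner u = false → G.E u (comb h u) := by
      intro h u hu
      by_cases hi : (h ++ [u]).findIdx p < (h ++ [u]).length
      · simp only [hcombdef, dif_pos hi]
        exact hfw_edge _ _ u hu
      · simp only [hcombdef, dif_neg hi]
        exact hg h u hu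
    refine ⟨comb, hcomb_edge, ?_⟩
    intro ρ h0 hplay hcons
    -- the play hits W
    have hhit : ∃ i, ρ i ∈ W := by
      by_contra hno
      push_neg at hno
      have hgc : StratConsistent G g ρ := by
        intro k hk
        have := hcons k hk
        rw [this]
        have hfull : (List.ofFn fun j : Fin k => ρ j) ++ [ρ k] = Hist ρ (k + 1) := by
          rw [Hist_succ]; rfl
        have hall : ∀ x ∈ Hist ρ (k + 1), p x = false := by
          intro x hx
          obtain ⟨j, _, rfl⟩ := mem_Hist hx
          simp [hp, hno j]
        have hlen : (Hist ρ (k+1)).findIdx p = (Hist ρ (k+1)).length :=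
          List.findIdx_eq_length.mpr hall
        show comb _ _ = _
        simp only [hcombdef, hfull, hlen, lt_irrefl, dif_neg (lt_irrefl _)]
        rfl
      obtain ⟨i, _, hi2⟩ := hreach ρ h0 hplay hgc
      exact hno i hi2
    set i₀ := Nat.find hhit with hi₀
    have hw : ρ i₀ ∈ W := Nat.find_spec hhit
    have hmin : ∀ j, j < i₀ → ρ j ∉ W := fun j hj => Nat.find_min hhit hj
    -- findIdx on any long enough prefix is i₀
    have hfind : ∀ k, i₀ ≤ k → (Hist ρ (k + 1)).findIdx p = i₀ := by
      intro k hk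
      have hlen : i₀ < (Hist ρ (k+1)).length := by simp; omega
      have hle : (Hist ρ (k+1)).findIdx p ≤ i₀ := by
        by_contra hlt
        push_neg at hlt
        have := List.not_of_lt_findIdx hlt
        rw [Hist_getElem] at this
        simp [hp, hw] at this
      rcases lt_or_eq_of_le hle with hlt | heq
      · exfalso
        have hlt' : (Hist ρ (k+1)).findIdx p < (Hist ρ (k+1)).length := lt_of_lt_of_le hlt (le_of_lt hlen)
        have := @List.findIdx_getElem _ p (Hist ρ (k+1)) hlt'
        rw [Hist_getElem] at this
        simp only [hp, decide_eq_true_eq] at this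
        exact hmin _ hlt this
      · exact heq
    -- the shifted play
    set τ : ℕ → V := fun j => ρ (i₀ + j) with hτ
    have hτ0 : τ 0 = ρ i₀ := by simp [hτ]
    have hτplay : IsPlay G τ := by
      intro j
      simp only [hτ, show i₀ + j + 1 = i₀ + (j + 1) by omega] at *
      rw [show i₀ + (j + 1) = (i₀ + j) + 1 by omega]
      exact hplay (i₀ + j)
    have hτcons : StratConsistent G (fw (ρ i₀)) τ := by
      intro j hown
      have hk : i₀ ≤ i₀ + j := Nat.le_add_right _ _
      have hc := hcons (i₀ + j) hown
      have hfull : (List.ofFn fun m : Fin (i₀ + j) => ρ m) ++ [ρ (i₀ + j)] = Hist ρ (i₀ + j + 1) := by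
        rw [Hist_succ]; rfl
      have hfi : (Hist ρ (i₀ + j + 1)).findIdx p = i₀ := hfind _ hk
      have hlt : (Hist ρ (i₀ + j + 1)).findIdx p < (Hist ρ (i₀ + j + 1)).length := by
        rw [hfi]; simp
      have : ρ (i₀ + j + 1) = fw ((Hist ρ (i₀+j+1))[(Hist ρ (i₀+j+1)).findIdx p]'hlt)
          ((List.ofFn fun m : Fin (i₀ + j) => ρ m).drop ((Hist ρ (i₀+j+1)).findIdx p)) (ρ (i₀ + j)) := by
        rw [hc]
        show comb _ _ = _
        simp only [hcombdef, hfull, dif_pos hlt]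
      have hget : (Hist ρ (i₀+j+1))[(Hist ρ (i₀+j+1)).findIdx p]'hlt = ρ i₀ := by
        rw [Hist_getElem]
        rw [hfi]
      have hdrop : (List.ofFn fun m : Fin (i₀ + j) => ρ m).drop ((Hist ρ (i₀+j+1)).findIdx p)
          = (List.ofFn fun l : Fin j => τ l) := by
        show (Hist ρ (i₀ + j)).drop _ = _
        rw [hfi, Hist_drop ρ i₀ (i₀ + j) hk]
        simp only [Nat.add_sub_cancel_left]
        rfl
      calc τ (j + 1) = ρ (i₀ + j + 1) := rfl
        _ = _ := by rw [this, hget, hdrop]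
    have hinf := hfw_win (ρ i₀) hw τ hτ0 hτplay hτcons
    intro n
    obtain ⟨m, hm, hmF⟩ := hinf n
    exact ⟨i₀ + m, by omega, hmF⟩


/-- In a Büchi game on a finite game graph in which every vertex has a
successor, the winning region of Player 0 is the `0`-attractor of `Recur₀(F)`. -/
theorem buchi_winning_region_eq_attractor_recur
    {V : Type*} [Fintype V] (G : GameGraph V) (F : Set V)
    (htotal : ∀ v : V, ∃ v', G.E v v') :
    BuchiW0 G F = Attr0 G (Recur0 G F) :=
  buchi_winning_region_eq_attractor_recur' G F

end Games
end
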